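/- arXiv:2105.09231 — 9 statements merged into one kernel-verified Lean document; each statement's English description precedes it below -/
import Mathlib

section
/- Let (V, ⟪·,·⟫) be a real inner product space of dimension 2m+1 with m ≥ 1, equipped with an almost contact metric structure (φ, ξ, η) with fundamental 2-form Φ. Let p, q : V → ℝ be linear functionals and let S : V × V → V be a bilinear map satisfying, for all x, y, z ∈ V: (i) ⟪S(x,y), z⟫ + ⟪S(x,z), y⟫ = 2 p(x)·(⟪y,z⟫ - η(y)η(z)), and (ii) S(x,y) - S(y,x) = -2 Φ(x,y)·q♯. Then S(x,y) = p(y)·(x - η(x)·ξ) + p(x)·(y - η(y)·ξ) - (⟪x,y⟫ - η(x)η(y))·p♯ + q(y)·φ x + q(x)·φ y - Φ(x,y)·q♯ for all x, y ∈ V. (This is the algebraic form of the Proposition determining the cosymplectic conformal connection: condition (i) expresses D_k(e^{2p} g_{ji}) = 2 e^{2p} p_k η_j η_i for the connection D = ∇ + S, since ∇g = 0 and ∇η = 0 on a cosymplectic manifold, and (ii) expresses the torsion condition Γ_{ji}^h - Γ_{ij}^h = -2 φ_{ji} q^h.) -/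
open RealInnerProductSpace

/-- The algebraic form of the Proposition determining the cosymplectic conformal
connection: the difference tensor `S` of a connection satisfying the metric condition (i)
and the torsion condition (ii) is given by the displayed formula. -/
theorem stmt_2
    {V : Type*} [NormedAddCommGroup V] [InnerProductSpace ℝ V] [FiniteDimensional ℝ V]
    (m : ℕ) (hm : 1 ≤ m) (hdim : Module.finrank ℝ V = 2 * m + 1)
    (φ : V →ₗ[ℝ] V) (ξ : V) (hξ : ⟪ξ, ξ⟫ = 1)
    (η : V → ℝ) (hη : ∀ x, η x = ⟪x, ξ⟫)
    (hφφ : ∀ x, φ (φ x) = -x + η x • ξ)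
    (hφξ : φ ξ = 0)
    (hηφ : ∀ x, η (φ x) = 0)
    (hmet : ∀ x y, ⟪φ x, φ y⟫ = ⟪x, y⟫ - η x * η y)
    (Φ : V → V → ℝ) (hΦ : ∀ x y, Φ x y = ⟪φ x, y⟫)
    (p : V →ₗ[ℝ] ℝ) (psharp : V) (hps : ∀ x, ⟪psharp, x⟫ = p x)
    (q : V →ₗ[ℝ] ℝ) (qsharp : V) (hqs : ∀ x, ⟪qsharp, x⟫ = q x)
    (S : V →ₗ[ℝ] V →ₗ[ℝ] V)
    (hSmetric : ∀ x y z, ⟪S x y, z⟫ + ⟪S x z, y⟫ = 2 * p x * (⟪y, z⟫ - η y * η z))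
    (hStorsion : ∀ x y, S x y - S y x = -(2 * Φ x y) • qsharp) :
    ∀ x y, S x y =
      p y • (x - η x • ξ) + p x • (y - η y • ξ) - (⟪x, y⟫ - η x * η y) • psharp
        + q y • φ x + q x • φ y - Φ x y • qsharp := by

  intro x y
  apply ext_inner_right ℝ
  intro z
  -- torsion at the inner-product level
  have hT : ∀ a b c : V, ⟪S a b, c⟫ - ⟪S b a, c⟫ = -(2 * Φ a b) * q c := by
    intro a b c
    have := congrArg (fun v => ⟪v, c⟫) (hStorsion a b)
    simpa [inner_sub_left, real_inner_smul_left, hqs] using this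
  have h1 := hSmetric x y z
  have h2 := hSmetric y z x
  have h3 := hSmetric z x y
  have t1 := hT x y z
  have t2 := hT y z x
  have t3 := hT x z y
  have key : ⟪S x y, z⟫ =
      p x * (⟪y, z⟫ - η y * η z) + p y * (⟪x, z⟫ - η x * η z)
        - p z * (⟪x, y⟫ - η x * η y)
        - Φ x y * q z + Φ x z * q y + Φ y z * q x := by
    rw [real_inner_comm x z] at h2
    linear_combination (h1 + h2 - h3 + t1 - t2 - t3) / 2
  rw [key]
  have hηz : ⟪ξ, z⟫ = η z := by rw [hη, real_inner_comm]
  simp only [inner_add_left, inner_sub_left, real_inner_smul_left, hqs, hps, hηz,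
    hΦ, RCLike.inner_apply, conj_trivial]
  ring
end

section
/- Let (V, ⟪·,·⟫) be a real inner product space of dimension 2m+1 with m ≥ 1, equipped with an almost contact metric structure (φ, ξ, η) with fundamental 2-form Φ. Let p, q : V → ℝ be linear functionals and define S : V × V → V by S(x,y) = p(y)·(x - η(x)·ξ) + p(x)·(y - η(y)·ξ) - (⟪x,y⟫ - η(x)η(y))·p♯ + q(y)·φ x + q(x)·φ y - Φ(x,y)·q♯. Then for all x, y ∈ V: S(x, φ y) - φ(S(x,y)) = (p(φ y) + q(y))·(x - η(x)·ξ) + (⟪x,y⟫ - η(x)η(y))·(φ(p♯) - q♯) + (q(φ y) - p(y))·φ x + Φ(x,y)·(p♯ + φ(q♯)). (This computes D_j φ_i^h for the cosymplectic conformal connection D = ∇ + S, since ∇φ = 0 on a cosymplectic manifold.) -/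
open RealInnerProductSpace

/-- Computation of `D φ` for the cosymplectic conformal connection `D = ∇ + S`. -/
theorem stmt_3
    {V : Type*} [NormedAddCommGroup V] [InnerProductSpace ℝ V] [FiniteDimensional ℝ V]
    (m : ℕ) (hm : 1 ≤ m) (hdim : Module.finrank ℝ V = 2 * m + 1)
    (φ : V →ₗ[ℝ] V) (ξ : V) (hξ : ⟪ξ, ξ⟫ = 1)
    (η : V → ℝ) (hη : ∀ x, η x = ⟪x, ξ⟫)
    (hφφ : ∀ x, φ (φ x) = -x + η x • ξ)
    (hφξ : φ ξ = 0)
    (hηφ : ∀ x, η (φ x) = 0)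
    (hmet : ∀ x y, ⟪φ x, φ y⟫ = ⟪x, y⟫ - η x * η y)
    (Φ : V → V → ℝ) (hΦ : ∀ x y, Φ x y = ⟪φ x, y⟫)
    (p : V →ₗ[ℝ] ℝ) (psharp : V) (hps : ∀ x, ⟪psharp, x⟫ = p x)
    (q : V →ₗ[ℝ] ℝ) (qsharp : V) (hqs : ∀ x, ⟪qsharp, x⟫ = q x)
    (S : V → V → V)
    (hS : ∀ x y, S x y =
      p y • (x - η x • ξ) + p x • (y - η y • ξ) - (⟪x, y⟫ - η x * η y) • psharp
        + q y • φ x + q x • φ y - Φ x y • qsharp) :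
    ∀ x y, S x (φ y) - φ (S x y) =
      (p (φ y) + q y) • (x - η x • ξ)
        + (⟪x, y⟫ - η x * η y) • (φ psharp - qsharp)
        + (q (φ y) - p y) • φ x
        + Φ x y • (psharp + φ qsharp) := by
  have hskew : ∀ x y, (⟪x, φ y⟫ : ℝ) = -⟪φ x, y⟫ := by
    intro x y
    have h1 := hmet x (φ y)
    rw [hφφ, hηφ] at h1
    have h2 : (⟪φ x, ξ⟫ : ℝ) = 0 := by rw [← hη]; exact hηφ x
    simp [inner_add_right, inner_neg_right, inner_smul_right, h2] at h1
    linarith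
  intro x y
  rw [hS, hS]
  have h3 := hskew x y
  simp only [map_add, map_sub, map_smul, hφφ, hφξ, hηφ, hΦ, hmet, h3, hη,
    smul_zero, mul_zero, sub_zero]
  module
end

section
/- Let (V, ⟪·,·⟫) be a real inner product space of dimension 2m+1 with m ≥ 1, equipped with an almost contact metric structure (φ, ξ, η) with fundamental 2-form Φ. Let p : V → ℝ be a linear functional with p(ξ) = 0, set q = -p ∘ φ, and define S : V × V → V by S(x,y) = p(y)·(x - η(x)·ξ) + p(x)·(y - η(y)·ξ) - (⟪x,y⟫ - η(x)η(y))·p♯ + q(y)·φ x + q(x)·φ y - Φ(x,y)·q♯. Then for all x, y, z ∈ V: 2 p(x)·(⟪y,z⟫ - η(y)η(z)) = ⟪S(x,y), z⟫ - η(S(x,y))·η(z) + ⟪S(x,z), y⟫ - η(S(x,z))·η(y). (This is the algebraic form of the Proposition that a cosymplectic conformal connection D = ∇ + S satisfies D_k(e^{2p}(g_{ji} - η_j η_i)) = 0, since ∇g = 0 and ∇η = 0 on a cosymplectic manifold.) -/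
open RealInnerProductSpace

/-- The cosymplectic conformal connection `D = ∇ + S` satisfies
`D_k (e^{2p}(g_{ji} - η_j η_i)) = 0`, in pointwise algebraic form. -/
theorem stmt_4
    {V : Type*} [NormedAddCommGroup V] [InnerProductSpace ℝ V] [FiniteDimensional ℝ V]
    (m : ℕ) (hm : 1 ≤ m) (hdim : Module.finrank ℝ V = 2 * m + 1)
    (φ : V →ₗ[ℝ] V) (ξ : V) (hξ : ⟪ξ, ξ⟫ = 1)
    (η : V → ℝ) (hη : ∀ x, η x = ⟪x, ξ⟫)
    (hφφ : ∀ x, φ (φ x) = -x + η x • ξ)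
    (hφξ : φ ξ = 0)
    (hηφ : ∀ x, η (φ x) = 0)
    (hmet : ∀ x y, ⟪φ x, φ y⟫ = ⟪x, y⟫ - η x * η y)
    (Φ : V → V → ℝ) (hΦ : ∀ x y, Φ x y = ⟪φ x, y⟫)
    (p : V →ₗ[ℝ] ℝ) (hpξ : p ξ = 0)
    (psharp : V) (hps : ∀ x, ⟪psharp, x⟫ = p x)
    (q : V → ℝ) (hq : ∀ x, q x = - p (φ x))
    (qsharp : V) (hqs : ∀ x, ⟪qsharp, x⟫ = q x)
    (S : V → V → V)
    (hS : ∀ x y, S x y =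
      p y • (x - η x • ξ) + p x • (y - η y • ξ) - (⟪x, y⟫ - η x * η y) • psharp
        + q y • φ x + q x • φ y - Φ x y • qsharp) :
    ∀ x y z, 2 * p x * (⟪y, z⟫ - η y * η z) =
      ⟪S x y, z⟫ - η (S x y) * η z + ⟪S x z, y⟫ - η (S x z) * η y := by
  have hφξ' : ∀ a : V, ⟪φ a, ξ⟫ = 0 := fun a => by rw [← hη, hηφ]
  have hskew : ∀ a b : V, ⟪φ a, b⟫ = -⟪a, φ b⟫ := by
    intro a b
    have h1 := hmet a (φ b)
    rw [hηφ, mul_zero, sub_zero, hφφ, inner_add_right, inner_neg_right,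
      real_inner_smul_right, hφξ', mul_zero, add_zero] at h1
    linarith
  have hqξ : q ξ = 0 := by rw [hq, hφξ, map_zero, neg_zero]
  have hpφ : ∀ a : V, ⟪psharp, φ a⟫ = - q a := fun a => by rw [hps, hq, neg_neg]
  intro x y z
  have hexp : ∀ a b : V,
      ⟪S x a, b⟫ = p a * (⟪x, b⟫ - η x * ⟪ξ, b⟫) + p x * (⟪a, b⟫ - η a * ⟪ξ, b⟫)
        - (⟪x, a⟫ - η x * η a) * ⟪psharp, b⟫ + q a * ⟪φ x, b⟫ + q x * ⟪φ a, b⟫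
        - Φ x a * ⟪qsharp, b⟫ := by
    intro a b
    rw [hS]
    simp [inner_add_left, inner_sub_left, real_inner_smul_left, mul_sub]
  have hηS : ∀ a : V, η (S x a) = 0 + p x * 0 := by
    intro a
    rw [hη, hexp, hξ, hps, hpξ, hqs, hqξ, hφξ', hφξ', ← hη, ← hη]
    ring
  rw [hexp, hexp, hηS, hηS]
  have e1 : (⟪ξ, y⟫ : ℝ) = η y := by rw [hη, real_inner_comm]
  have e2 : (⟪ξ, z⟫ : ℝ) = η z := by rw [hη, real_inner_comm]
  rw [e1, e2, hps, hps, hqs, hqs, hΦ, hΦ]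
  have h1 : ⟪φ y, z⟫ = -⟪φ z, y⟫ := by rw [hskew, real_inner_comm]
  have h4 : (⟪z, y⟫ : ℝ) = ⟪y, z⟫ := real_inner_comm y z
  rw [h1, h4]
  ring
end

section
/- Let (V, ⟪·,·⟫) be a real inner product space of dimension 2m+1 with m ≥ 1, equipped with an almost contact metric structure (φ, ξ, η) with fundamental 2-form Φ. Let p : V → ℝ be a linear functional with p(ξ) = 0, set q = -p ∘ φ and λ = ⟪p♯, p♯⟫. Let A be a symmetric bilinear form on V with A(x, ξ) = 0 for all x, and define bilinear forms P(x,y) = A(x,y) - p(x)p(y) + q(x)q(y) + (λ/2)(⟪x,y⟫ - η(x)η(y)), B̃(x,y) = -A(x, φ y), and Q(x,y) = B̃(x,y) - p(x)q(y) - p(y)q(x) + (λ/2)·Φ(x,y). Then for all x, y ∈ V: Q(x,y) = -P(x, φ y) and P(x,y) = Q(x, φ y). (Here A plays the role of ∇p and B̃ the role of ∇q, since q = -p∘φ and ∇φ = 0 on a cosymplectic manifold; P and Q are the tensors p_{ji} and q_{ji} appearing in the curvature of the cosymplectic conformal connection.) -/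
open RealInnerProductSpace

/-- The tensors `p_{ji}` and `q_{ji}` of the curvature of the cosymplectic conformal
connection satisfy `q_{ji} = -p_{jt} φ_i^t` and `p_{ji} = q_{jt} φ_i^t`. -/
theorem stmt_5
    {V : Type*} [NormedAddCommGroup V] [InnerProductSpace ℝ V] [FiniteDimensional ℝ V]
    (m : ℕ) (hm : 1 ≤ m) (hdim : Module.finrank ℝ V = 2 * m + 1)
    (φ : V →ₗ[ℝ] V) (ξ : V) (hξ : ⟪ξ, ξ⟫ = 1)
    (η : V → ℝ) (hη : ∀ x, η x = ⟪x, ξ⟫)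
    (hφφ : ∀ x, φ (φ x) = -x + η x • ξ)
    (hφξ : φ ξ = 0)
    (hηφ : ∀ x, η (φ x) = 0)
    (hmet : ∀ x y, ⟪φ x, φ y⟫ = ⟪x, y⟫ - η x * η y)
    (Φ : V → V → ℝ) (hΦ : ∀ x y, Φ x y = ⟪φ x, y⟫)
    (p : V →ₗ[ℝ] ℝ) (hpξ : p ξ = 0)
    (psharp : V) (hps : ∀ x, ⟪psharp, x⟫ = p x)
    (q : V → ℝ) (hq : ∀ x, q x = - p (φ x))
    (lam : ℝ) (hlam : lam = ⟪psharp, psharp⟫)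
    (A : V →ₗ[ℝ] V →ₗ[ℝ] ℝ) (hAsymm : ∀ x y, A x y = A y x) (hAξ : ∀ x, A x ξ = 0)
    (P : V → V → ℝ)
    (hP : ∀ x y, P x y = A x y - p x * p y + q x * q y
      + (lam / 2) * (⟪x, y⟫ - η x * η y))
    (B : V → V → ℝ) (hB : ∀ x y, B x y = - A x (φ y))
    (Q : V → V → ℝ)
    (hQ : ∀ x y, Q x y = B x y - p x * q y - p y * q x + (lam / 2) * Φ x y) :
    ∀ x y, Q x y = - P x (φ y) ∧ P x y = Q x (φ y) := by
  intro x y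
  have hpφφ : ∀ z, p (φ (φ z)) = - p z := by
    intro z
    rw [hφφ z]
    simp [hpξ]
  have hqφ : ∀ z, q (φ z) = p z := by
    intro z
    rw [hq, hpφφ z]; ring
  have hpφ : ∀ z, p (φ z) = - q z := by
    intro z; rw [hq]; ring
  have hskew : ∀ a b : V, ⟪a, φ b⟫ = - ⟪φ a, b⟫ := by
    intro a b
    have h1 := hmet a (φ b)
    rw [hφφ b, hηφ b] at h1
    have h2 : ⟪φ a, -b + η b • ξ⟫ = - ⟪φ a, b⟫ + η b * ⟪φ a, ξ⟫ := by
      simp [inner_add_right, inner_smul_right, inner_neg_right]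
    have h3 : ⟪φ a, ξ⟫ = 0 := by rw [← hη]; exact hηφ a
    rw [h2, h3] at h1
    linarith [h1]
  have hAφφ : A x (φ (φ y)) = - A x y := by
    rw [hφφ y]
    simp [hAξ]
  have hAx : A x ξ = 0 := hAξ x
  constructor
  · rw [hQ, hP, hB, hΦ, hqφ, hpφ, hηφ, hskew x y]
    ring
  · rw [hP, hQ, hB, hΦ, hAφφ, hqφ, hpφ, hmet]
    ring
end

section
/- Let (V, ⟪·,·⟫) be a real inner product space of dimension 2m+1 with m > 2, equipped with an almost contact metric structure (φ, ξ, η) with fundamental 2-form Φ. Let p be a linear functional with p(ξ) = 0, q = -p ∘ φ, λ = ⟪p♯, p♯⟫; let A be a symmetric bilinear form with A(x, ξ) = 0 for all x, and define P, Q, α, β and the quadrilinear form K as in the context. If K satisfies the pair symmetry K(x,y,z,w) = K(z,w,x,y) for all x, y, z, w ∈ V, then Q is skew-symmetric: Q(x,y) + Q(y,x) = 0 for all x, y ∈ V. -/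
open RealInnerProductSpace

/-- If the curvature-type quadrilinear form `K` (expressing zero curvature of the
cosymplectic conformal connection) has the pair symmetry, then `Q` is skew-symmetric. -/
theorem stmt_7
    {V : Type*} [NormedAddCommGroup V] [InnerProductSpace ℝ V] [FiniteDimensional ℝ V]
    (m : ℕ) (hm : 2 < m) (hdim : Module.finrank ℝ V = 2 * m + 1)
    (φ : V →ₗ[ℝ] V) (ξ : V) (hξ : ⟪ξ, ξ⟫ = 1)
    (η : V → ℝ) (hη : ∀ x, η x = ⟪x, ξ⟫)
    (hφφ : ∀ x, φ (φ x) = -x + η x • ξ)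
    (hφξ : φ ξ = 0)
    (hηφ : ∀ x, η (φ x) = 0)
    (hmet : ∀ x y, ⟪φ x, φ y⟫ = ⟪x, y⟫ - η x * η y)
    (Φ : V → V → ℝ) (hΦ : ∀ x y, Φ x y = ⟪φ x, y⟫)
    (p : V →ₗ[ℝ] ℝ) (hpξ : p ξ = 0)
    (psharp : V) (hps : ∀ x, ⟪psharp, x⟫ = p x)
    (q : V → ℝ) (hq : ∀ x, q x = - p (φ x))
    (lam : ℝ) (hlam : lam = ⟪psharp, psharp⟫)
    (A : V →ₗ[ℝ] V →ₗ[ℝ] ℝ) (hAsymm : ∀ x y, A x y = A y x) (hAξ : ∀ x, A x ξ = 0)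
    (P : V → V → ℝ)
    (hP : ∀ x y, P x y = A x y - p x * p y + q x * q y
      + (lam / 2) * (⟪x, y⟫ - η x * η y))
    (Q : V → V → ℝ) (hQ : ∀ x y, Q x y = - P x (φ y))
    (α : V → V → ℝ) (hα : ∀ x y, α x y = -(Q x y - Q y x - lam * Φ x y))
    (β : V → V → ℝ) (hβ : ∀ x y, β x y = 2 * (p x * q y - p y * q x))
    (K : V → V → V → V → ℝ)
    (hK : ∀ x y z w, K x y z w =
      (⟪x, w⟫ - η x * η w) * P y z - (⟪y, w⟫ - η y * η w) * P x z
        + P x w * (⟪y, z⟫ - η y * η z) - P y w * (⟪x, z⟫ - η x * η z)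
        + Φ x w * Q y z - Φ y w * Q x z + Q x w * Φ y z - Q y w * Φ x z
        + α x y * Φ z w - Φ x y * β z w)
    (hpair : ∀ x y z w, K x y z w = K z w x y) :
    ∀ x y, Q x y + Q y x = 0 := by
  -- basic facts
  have hηξ : η ξ = 1 := by rw [hη]; exact hξ
  have hφηξ : ∀ u, ⟪φ u, ξ⟫ = 0 := by
    intro u; rw [← hη]; exact hηφ u
  have hswap : ∀ u v, ⟪u, φ v⟫ = -⟪φ u, v⟫ := by
    intro u v
    have h1 : ⟪φ u, φ (φ v)⟫ = ⟪u, φ v⟫ := by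
      rw [hmet, hηφ, mul_zero, sub_zero]
    rw [hφφ] at h1
    rw [inner_add_right, inner_neg_right, inner_smul_right, hφηξ, mul_zero, add_zero] at h1
    linarith
  have hPsymm : ∀ u v, P u v = P v u := by
    intro u v
    rw [hP, hP, hAsymm, real_inner_comm]
    ring
  -- P kills ξ in the first slot after adding multiples of ξ
  have hPshift : ∀ (u w : V) (c : ℝ), P (u + c • ξ) w = P u w := by
    intro u w c
    have hAξ' : A ξ w = 0 := by rw [hAsymm]; exact hAξ w
    simp only [hP, map_add, map_smul, LinearMap.add_apply, LinearMap.smul_apply,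
      smul_eq_mul, hAξ', hpξ, hq, hφξ, map_zero, inner_add_left, real_inner_smul_left,
      hη, hξ, real_inner_comm ξ w]
    ring
  intro x0 y0
  set a := x0 - η x0 • ξ with ha
  set b := y0 - η y0 • ξ with hb
  have hx0 : x0 = a + η x0 • ξ := by rw [ha]; abel
  have hy0 : y0 = b + η y0 • ξ := by rw [hb]; abel
  have hφx0 : φ y0 = φ b := by
    rw [hy0, map_add, map_smul, hφξ, smul_zero, add_zero]
  have hφy0' : φ x0 = φ a := by
    rw [hx0, map_add, map_smul, hφξ, smul_zero, add_zero]
  have hQab : Q x0 y0 = Q a b := by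
    rw [hQ, hQ, hφx0, hx0, hPshift]
  have hQba : Q y0 x0 = Q b a := by
    rw [hQ, hQ, hφy0', hy0, hPshift]
  rw [hQab, hQba]
  have hηa : η a = 0 := by
    rw [hη, ha, inner_sub_left, real_inner_smul_left, hξ, ← hη]; ring
  have hηb : η b = 0 := by
    rw [hη, hb, inner_sub_left, real_inner_smul_left, hξ, ← hη]; ring
  clear hx0 hy0 hφx0 hφy0' hQab hQba ha hb
  -- choose y orthogonal to ξ, a, b, φ a, φ b
  set T : Submodule ℝ V := Submodule.span ℝ (Set.range ![ξ, a, b, φ a, φ b]) with hT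
  have hTle : Module.finrank ℝ T ≤ 5 := by
    have := finrank_range_le_card (R := ℝ) ![ξ, a, b, φ a, φ b]
    simpa [Set.finrank] using this
  have horth : Module.finrank ℝ T + Module.finrank ℝ Tᗮ = Module.finrank ℝ V :=
    T.finrank_add_finrank_orthogonal
  have hpos : 0 < Module.finrank ℝ Tᗮ := by omega
  have hbot : Tᗮ ≠ ⊥ := by
    intro h
    rw [h] at hpos
    simp at hpos
  obtain ⟨y, hyT, hy0⟩ := Submodule.exists_mem_ne_zero_of_ne_bot hbot
  have hyo : ∀ v ∈ Set.range ![ξ, a, b, φ a, φ b], ⟪v, y⟫ = 0 := by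
    intro v hv
    exact (Submodule.mem_orthogonal T y).mp hyT v (Submodule.subset_span hv)
  have hyξ : ⟪ξ, y⟫ = 0 := hyo ξ ⟨0, rfl⟩
  have hya : ⟪a, y⟫ = 0 := hyo a ⟨1, rfl⟩
  have hyb : ⟪b, y⟫ = 0 := hyo b ⟨2, rfl⟩
  have hyfa : ⟪φ a, y⟫ = 0 := hyo (φ a) ⟨3, rfl⟩
  have hyfb : ⟪φ b, y⟫ = 0 := hyo (φ b) ⟨4, rfl⟩
  -- scalar facts
  have hηy : η y = 0 := by rw [hη, real_inner_comm]; exact hyξ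
  have hηu : η (φ y) = 0 := hηφ y
  have hr : (0:ℝ) < ⟪y, y⟫ :=
    lt_of_le_of_ne real_inner_self_nonneg (fun h => hy0 (inner_self_eq_zero.mp h.symm))
  have e1 : ⟪a, φ y⟫ = 0 := by rw [hswap, hyfa]; ring
  have e1' : ⟪φ y, a⟫ = 0 := by rw [real_inner_comm]; exact e1
  have e2 : ⟪y, φ y⟫ = 0 := by
    have := hswap y y
    have h2 : ⟪φ y, y⟫ = ⟪y, φ y⟫ := real_inner_comm _ _
    linarith
  have e2' : ⟪φ y, y⟫ = 0 := by rw [real_inner_comm]; exact e2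
  have e3 : ⟪y, b⟫ = 0 := by rw [real_inner_comm]; exact hyb
  have e4 : ⟪b, φ y⟫ = 0 := by rw [hswap, hyfb]; ring
  have e5 : ⟪y, a⟫ = 0 := by rw [real_inner_comm]; exact hya
  -- Φ values
  have f1 : Φ a (φ y) = 0 := by rw [hΦ, hmet, hya, hηa]; ring
  have f2 : Φ y (φ y) = ⟪y, y⟫ := by rw [hΦ, hmet, hηy]; ring
  have e5 : ⟪y, a⟫ = 0 := by rw [real_inner_comm]; exact hya
  have f3 : Φ y b = 0 := by
    rw [hΦ]
    have h1 := hswap y b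
    have h2 : ⟪y, φ b⟫ = 0 := by rw [real_inner_comm]; exact hyfb
    have h3 : ⟪φ y, b⟫ = ⟪b, φ y⟫ := real_inner_comm _ _
    linarith [hswap b y]
  have f4 : Φ b (φ y) = 0 := by rw [hΦ, hmet, hyb, hηb]; ring
  have f5 : Φ a y = 0 := by rw [hΦ, hyfa]
  have f6 : Φ (φ y) y = -⟪y, y⟫ := by
    rw [hΦ, hφφ, hηy, zero_smul, add_zero, inner_neg_left]
  have f7 : Φ (φ y) a = 0 := by
    rw [hΦ, hφφ, hηy, zero_smul, add_zero, inner_neg_left, e5]; ring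
  have f8 : Φ b a = -Φ a b := by
    rw [hΦ, hΦ]
    have h1 := hswap a b
    have h2 : ⟪φ b, a⟫ = ⟪a, φ b⟫ := real_inner_comm _ _
    linarith
  have f9 : Φ b y = 0 := by rw [hΦ, hyfb]
  have f10 : Φ (φ y) b = 0 := by
    rw [hΦ, hφφ, hηy, zero_smul, add_zero, inner_neg_left, e3]; ring
  have f11 : Φ a b = ⟪φ a, b⟫ := hΦ a b
  have e6 : ⟪φ y, b⟫ = 0 := by rw [real_inner_comm]; exact e4
  have f12 : Φ y a = 0 := by rw [hΦ]; exact e1'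
  have hba : ⟪b, a⟫ = ⟪a, b⟫ := real_inner_comm _ _
  have hPuy : P (φ y) y = P y (φ y) := hPsymm _ _
  -- two instantiations of the pair symmetry
  have h1 := hpair a y b (φ y)
  have h2 := hpair b y a (φ y)
  rw [hK, hK] at h1 h2
  simp only [e1, e2, e2', e3, hyb, e1', e4, e5, hya, hηa, hηb, hηy, hηu,
    f1, f2, f3, f4, f5, f6, f7, f8, f9, f10, f11, f12, e6, hba, hPuy,
    mul_zero, zero_mul, sub_zero, zero_sub, add_zero, zero_add, neg_zero] at h1 h2
  ring_nf at h1 h2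
  have h3 : ⟪y, y⟫ * (Q a b + Q b a) = 0 := by linarith
  have h4 : Q a b + Q b a = 0 := by
    rcases mul_eq_zero.mp h3 with h | h
    · exact absurd h hr.ne'
    · exact h
  exact h4
end

section
/- Let (V, ⟪·,·⟫) be a real inner product space of dimension 2m+1 with m > 2, equipped with an almost contact metric structure (φ, ξ, η) with fundamental 2-form Φ. Let p be a linear functional with p(ξ) = 0, q = -p ∘ φ, λ = ⟪p♯, p♯⟫; let A be a symmetric bilinear form with A(x, ξ) = 0 for all x, and define P, Q, α, β and the quadrilinear form K as in the context. If K satisfies the pair symmetry K(x,y,z,w) = K(z,w,x,y) and the first Bianchi identity K(x,y,z,w) + K(y,z,x,w) + K(z,x,y,w) = 0 for all x, y, z, w ∈ V, then for any orthonormal basis (e_i) of V: Σ_i P(e_i, e_i) = -(m-2)·λ, and β(x,y) = λ·Φ(x,y) + 2·Q(x,y) for all x, y ∈ V. -/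
open RealInnerProductSpace

/-- Under pair symmetry and the first Bianchi identity for `K`,
one has `tr P = -(m-2)λ` and `β = λ Φ + 2 Q`. -/
theorem stmt_8
    {V : Type*} [NormedAddCommGroup V] [InnerProductSpace ℝ V] [FiniteDimensional ℝ V]
    (m : ℕ) (hm : 2 < m) (hdim : Module.finrank ℝ V = 2 * m + 1)
    (φ : V →ₗ[ℝ] V) (ξ : V) (hξ : ⟪ξ, ξ⟫ = 1)
    (η : V → ℝ) (hη : ∀ x, η x = ⟪x, ξ⟫)
    (hφφ : ∀ x, φ (φ x) = -x + η x • ξ)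
    (hφξ : φ ξ = 0)
    (hηφ : ∀ x, η (φ x) = 0)
    (hmet : ∀ x y, ⟪φ x, φ y⟫ = ⟪x, y⟫ - η x * η y)
    (Φ : V → V → ℝ) (hΦ : ∀ x y, Φ x y = ⟪φ x, y⟫)
    (p : V →ₗ[ℝ] ℝ) (hpξ : p ξ = 0)
    (psharp : V) (hps : ∀ x, ⟪psharp, x⟫ = p x)
    (q : V → ℝ) (hq : ∀ x, q x = - p (φ x))
    (lam : ℝ) (hlam : lam = ⟪psharp, psharp⟫)
    (A : V →ₗ[ℝ] V →ₗ[ℝ] ℝ) (hAsymm : ∀ x y, A x y = A y x) (hAξ : ∀ x, A x ξ = 0)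
    (P : V → V → ℝ)
    (hP : ∀ x y, P x y = A x y - p x * p y + q x * q y
      + (lam / 2) * (⟪x, y⟫ - η x * η y))
    (Q : V → V → ℝ) (hQ : ∀ x y, Q x y = - P x (φ y))
    (α : V → V → ℝ) (hα : ∀ x y, α x y = -(Q x y - Q y x - lam * Φ x y))
    (β : V → V → ℝ) (hβ : ∀ x y, β x y = 2 * (p x * q y - p y * q x))
    (K : V → V → V → V → ℝ)
    (hK : ∀ x y z w, K x y z w =
      (⟪x, w⟫ - η x * η w) * P y z - (⟪y, w⟫ - η y * η w) * P x z
        + P x w * (⟪y, z⟫ - η y * η z) - P y w * (⟪x, z⟫ - η x * η z)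
        + Φ x w * Q y z - Φ y w * Q x z + Q x w * Φ y z - Q y w * Φ x z
        + α x y * Φ z w - Φ x y * β z w)
    (hpair : ∀ x y z w, K x y z w = K z w x y)
    (hbianchi : ∀ x y z w, K x y z w + K y z x w + K z x y w = 0)
    (e : OrthonormalBasis (Fin (2 * m + 1)) ℝ V) :
    (∑ i, P (e i) (e i) = -((m : ℝ) - 2) * lam) ∧
      ∀ x y, β x y = lam * Φ x y + 2 * Q x y := by
  -- basic identities
  have hφξ' : ∀ a : V, ⟪φ a, ξ⟫ = 0 := fun a => by rw [← hη]; exact hηφ a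
  have hskew : ∀ a b : V, ⟪φ a, b⟫ = -⟪a, φ b⟫ := by
    intro a b
    have h1 := hmet a (φ b)
    rw [hφφ b, hηφ b, inner_add_right, inner_neg_right, real_inner_smul_right,
      hφξ' a] at h1
    linarith
  have hΦskew : ∀ a b : V, Φ a b = -Φ b a := by
    intro a b
    rw [hΦ, hΦ, hskew, real_inner_comm]
  have hPsymm : ∀ a b : V, P a b = P b a := by
    intro a b
    rw [hP, hP, hAsymm, real_inner_comm]; ring
  -- the cyclic identity coming from the first Bianchi identity
  have cyc : ∀ x y z w : V,
      (2 * Q x w + lam * Φ x w - β x w) * Φ y z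
        + (2 * Q y w + lam * Φ y w - β y w) * Φ z x
        + (2 * Q z w + lam * Φ z w - β z w) * Φ x y = 0 := by
    intro x y z w
    have hb := hbianchi x y z w
    rw [hK x y z w, hK y z x w, hK z x y w, hα x y, hα y z, hα z x] at hb
    rw [hPsymm z x, hPsymm y x, hPsymm z y, hΦskew z x, hΦskew y x, hΦskew z y,
      real_inner_comm z x, real_inner_comm y x, real_inner_comm z y] at hb
    rw [hΦskew z x]
    rw [hβ x w, hβ y w, hβ z w] at hb ⊢
    linear_combination hb
  -- D = 0 pointwise
  have Dzero : ∀ x w : V, 2 * Q x w + lam * Φ x w - β x w = 0 := by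
    intro x w
    set U : Submodule ℝ V := Submodule.span ℝ {φ x, x - η x • ξ, ξ} with hU
    have hUfin : Module.finrank ℝ U ≤ 3 := by
      classical
      have h := finrank_span_finset_le_card (R := ℝ) ({φ x, x - η x • ξ, ξ} : Finset V)
      have hcard : ({φ x, x - η x • ξ, ξ} : Finset V).card ≤ 3 :=
        (Finset.card_insert_le _ _).trans (Nat.succ_le_succ (Finset.card_insert_le _ _))
      have hcoe : ((({φ x, x - η x • ξ, ξ} : Finset V) : Set V)) = {φ x, x - η x • ξ, ξ} := by
        simp
      rw [Set.finrank, hcoe] at h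
      exact h.trans hcard
    have hUne : Uᗮ ≠ ⊥ := by
      intro hbot
      have htop : U = ⊤ := Submodule.orthogonal_eq_bot_iff.mp hbot
      rw [htop] at hUfin
      rw [finrank_top, hdim] at hUfin
      omega
    obtain ⟨y, hyU, hy0⟩ := Submodule.exists_mem_ne_zero_of_ne_bot hUne
    have horth : ∀ u ∈ U, ⟪u, y⟫ = 0 := (Submodule.mem_orthogonal U y).mp hyU
    have h1 : ⟪φ x, y⟫ = 0 :=
      horth _ (Submodule.subset_span (by simp))
    have h2 : ⟪x - η x • ξ, y⟫ = 0 :=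
      horth _ (Submodule.subset_span (by simp))
    have h3 : ⟪ξ, y⟫ = 0 :=
      horth _ (Submodule.subset_span (by simp))
    have hηy : η y = 0 := by rw [hη, real_inner_comm]; exact h3
    have hxy : ⟪x, y⟫ = 0 := by
      rw [inner_sub_left, real_inner_smul_left, h3] at h2
      linarith
    have hΦxy : Φ x y = 0 := by rw [hΦ]; exact h1
    have hΦyy : Φ y (φ y) = ⟪y, y⟫ := by
      rw [hΦ, hmet, hηy]; ring
    have hΦfy : Φ (φ y) x = 0 := by
      rw [hΦ, hφφ y, hηy, zero_smul, add_zero, inner_neg_left, real_inner_comm, hxy,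
        neg_zero]
    have hc := cyc x y (φ y) w
    rw [hΦyy, hΦxy, hΦfy] at hc
    have hyy : ⟪y, y⟫ ≠ 0 := fun h => hy0 (inner_self_eq_zero.mp h)
    have : (2 * Q x w + lam * Φ x w - β x w) * ⟪y, y⟫ = 0 := by linarith
    exact (mul_eq_zero.mp this).resolve_right hyy
  -- second conclusion
  have part2 : ∀ x y : V, β x y = lam * Φ x y + 2 * Q x y := by
    intro x y
    have := Dzero x y
    linarith
  refine ⟨?_, part2⟩
  -- the diagonal of P
  have hPxx : ∀ x : V, P x x
      = p x * p x + q x * q x - (lam / 2) * (⟪x, x⟫ - η x * η x) := by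
    intro x
    have hd := Dzero x (φ x)
    rw [hQ, hφφ x, hΦ, hmet, hβ] at hd
    have hqφ : q (φ x) = p x := by
      rw [hq, hφφ x, map_add, map_neg, map_smul, hpξ, smul_zero, add_zero, neg_neg]
    have hpφ : p (φ x) = - q x := by rw [hq]; ring
    rw [hqφ, hpφ] at hd
    have hPexp : P x (-x + η x • ξ) = -P x x := by
      rw [hP, hP]
      have hqexp : q (-x + η x • ξ) = - q x := by
        rw [hq, map_add, map_neg, map_smul, hφξ, smul_zero, add_zero, map_neg, hq]
      rw [hqexp, map_add, map_neg, map_smul, hAξ, smul_zero, add_zero,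
        map_add, map_neg, map_smul, hpξ, smul_zero, add_zero,
        inner_add_right, inner_neg_right, real_inner_smul_right]
      have hηexp : η (-x + η x • ξ) = 0 := by
        rw [hη, inner_add_left, inner_neg_left, real_inner_smul_left, hξ, hη]
        ring
      rw [hηexp, hη]
      ring
    rw [hPexp] at hd
    linarith
  -- trace computation
  have hqs : ∀ x : V, q x = ⟪φ psharp, x⟫ := by
    intro x
    rw [hq, ← hps, ← hskew]
  have hημ : ⟪psharp, ξ⟫ = 0 := by rw [hps]; exact hpξ
  have hsum1 : ∑ i, ⟪psharp, e i⟫ * ⟪e i, psharp⟫ = lam := by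
    rw [e.sum_inner_mul_inner, hlam]
  have hsum2 : ∑ i, ⟪φ psharp, e i⟫ * ⟪e i, φ psharp⟫ = lam := by
    rw [e.sum_inner_mul_inner, hmet, hη, hημ, hlam]; ring
  have hsum3 : ∑ i, ⟪ξ, e i⟫ * ⟪e i, ξ⟫ = 1 := by
    rw [e.sum_inner_mul_inner, hξ]
  have hterm : ∀ i, P (e i) (e i)
      = ⟪psharp, e i⟫ * ⟪e i, psharp⟫ + ⟪φ psharp, e i⟫ * ⟪e i, φ psharp⟫
        - (lam / 2) * (1 - ⟪ξ, e i⟫ * ⟪e i, ξ⟫) := by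
    intro i
    have hee : ⟪e i, e i⟫ = (1 : ℝ) := by
      rw [real_inner_self_eq_norm_mul_norm, e.orthonormal.1 i, one_mul]
    rw [hPxx, hqs, ← hps, hee, hη]
    rw [real_inner_comm (e i) psharp, real_inner_comm (e i) (φ psharp),
      real_inner_comm (e i) ξ]
  calc ∑ i, P (e i) (e i)
      = ∑ i, (⟪psharp, e i⟫ * ⟪e i, psharp⟫ + ⟪φ psharp, e i⟫ * ⟪e i, φ psharp⟫
        - (lam / 2) * (1 - ⟪ξ, e i⟫ * ⟪e i, ξ⟫)) := Finset.sum_congr rfl fun i _ => hterm i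
    _ = -((m : ℝ) - 2) * lam := by
        rw [Finset.sum_sub_distrib, Finset.sum_add_distrib, hsum1, hsum2, ← Finset.mul_sum,
          Finset.sum_sub_distrib, hsum3, Finset.sum_const, Finset.card_univ, Fintype.card_fin]
        push_cast
        ring
end

section
/- Let (V, ⟪·,·⟫) be a real inner product space of dimension 2m+1 with m > 2, equipped with an almost contact metric structure (φ, ξ, η) with fundamental 2-form Φ. Let p be a linear functional with p(ξ) = 0, q = -p ∘ φ, λ = ⟪p♯, p♯⟫; let A be a symmetric bilinear form with A(x, ξ) = 0 for all x, and define P, Q, α, β and the quadrilinear form K as in the context. Assume K satisfies the pair symmetry K(x,y,z,w) = K(z,w,x,y) and the first Bianchi identity K(x,y,z,w) + K(y,z,x,w) + K(z,x,y,w) = 0 for all x, y, z, w ∈ V. Fix an orthonormal basis (e_1, …, e_{2m+1}) of V and set Ric(y,z) = Σ_i K(e_i, y, z, e_i), Scal = Σ_i Ric(e_i, e_i), and tr P = Σ_i P(e_i, e_i). Then Ric(y,z) = (2m+4)·P(y,z) + (tr P)·(⟪y,z⟫ - η(y)η(z)) for all y, z ∈ V, and Scal = (4m+4)·(tr P). 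-/
open RealInnerProductSpace

/-- Under pair symmetry and the first Bianchi identity for `K`, the Ricci tensor
satisfies `Ric = (2m+4) P + (tr P)(g - η ⊗ η)` and `Scal = (4m+4) tr P`. -/
theorem stmt_10
    {V : Type*} [NormedAddCommGroup V] [InnerProductSpace ℝ V] [FiniteDimensional ℝ V]
    (m : ℕ) (hm : 2 < m) (hdim : Module.finrank ℝ V = 2 * m + 1)
    (φ : V →ₗ[ℝ] V) (ξ : V) (hξ : ⟪ξ, ξ⟫ = 1)
    (η : V → ℝ) (hη : ∀ x, η x = ⟪x, ξ⟫)
    (hφφ : ∀ x, φ (φ x) = -x + η x • ξ)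
    (hφξ : φ ξ = 0)
    (hηφ : ∀ x, η (φ x) = 0)
    (hmet : ∀ x y, ⟪φ x, φ y⟫ = ⟪x, y⟫ - η x * η y)
    (Φ : V → V → ℝ) (hΦ : ∀ x y, Φ x y = ⟪φ x, y⟫)
    (p : V →ₗ[ℝ] ℝ) (hpξ : p ξ = 0)
    (psharp : V) (hps : ∀ x, ⟪psharp, x⟫ = p x)
    (q : V → ℝ) (hq : ∀ x, q x = - p (φ x))
    (lam : ℝ) (hlam : lam = ⟪psharp, psharp⟫)
    (A : V →ₗ[ℝ] V →ₗ[ℝ] ℝ) (hAsymm : ∀ x y, A x y = A y x) (hAξ : ∀ x, A x ξ = 0)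
    (P : V → V → ℝ)
    (hP : ∀ x y, P x y = A x y - p x * p y + q x * q y
      + (lam / 2) * (⟪x, y⟫ - η x * η y))
    (Q : V → V → ℝ) (hQ : ∀ x y, Q x y = - P x (φ y))
    (α : V → V → ℝ) (hα : ∀ x y, α x y = -(Q x y - Q y x - lam * Φ x y))
    (β : V → V → ℝ) (hβ : ∀ x y, β x y = 2 * (p x * q y - p y * q x))
    (K : V → V → V → V → ℝ)
    (hK : ∀ x y z w, K x y z w =
      (⟪x, w⟫ - η x * η w) * P y z - (⟪y, w⟫ - η y * η w) * P x z
        + P x w * (⟪y, z⟫ - η y * η z) - P y w * (⟪x, z⟫ - η x * η z)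
        + Φ x w * Q y z - Φ y w * Q x z + Q x w * Φ y z - Q y w * Φ x z
        + α x y * Φ z w - Φ x y * β z w)
    (hpair : ∀ x y z w, K x y z w = K z w x y)
    (hbianchi : ∀ x y z w, K x y z w + K y z x w + K z x y w = 0)
    (e : OrthonormalBasis (Fin (2 * m + 1)) ℝ V)
    (Ric : V → V → ℝ) (hRic : ∀ y z, Ric y z = ∑ i, K (e i) y z (e i))
    (Scal : ℝ) (hScal : Scal = ∑ i, Ric (e i) (e i))
    (trP : ℝ) (htrP : trP = ∑ i, P (e i) (e i)) :
    (∀ y z, Ric y z = (2 * (m : ℝ) + 4) * P y z + trP * (⟪y, z⟫ - η y * η z)) ∧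
      Scal = (4 * (m : ℝ) + 4) * trP := by
  classical
  -- skew-adjointness of φ
  have hsk : ∀ a b : V, ⟪φ a, b⟫ = -⟪a, φ b⟫ := by
    intro a b
    have h := hmet a (φ b)
    rw [hφφ, hηφ] at h
    have hx : ⟪φ a, ξ⟫ = 0 := by rw [← hη]; exact hηφ a
    rw [inner_add_right, inner_neg_right, real_inner_smul_right, hx] at h
    linarith
  have hφself2 : ∀ u : V, ⟪u, φ u⟫ = 0 := by
    intro u
    have h1 := hsk u u
    have h2 := real_inner_comm u (φ u)
    linarith
  have hpe : ∀ v : V, p v = ⟪v, psharp⟫ := by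
    intro v; rw [← hps, real_inner_comm]
  have hqe : ∀ v : V, q v = ⟪v, φ psharp⟫ := by
    intro v
    have h1 := hsk psharp v
    have h2 := real_inner_comm (φ psharp) v
    have h3 := hps (φ v)
    rw [hq]; linarith
  have hpφ : ∀ v : V, p (φ v) = -q v := by
    intro v; rw [hq]; ring
  have hqφ : ∀ v : V, q (φ v) = p v := by
    intro v
    rw [hq, hφφ]
    simp [hpξ]
  have Psym : ∀ a b : V, P a b = P b a := by
    intro a b
    simp only [hP]
    rw [hAsymm, real_inner_comm]
    ring
  have Φskew : ∀ a b : V, Φ a b = -Φ b a := by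
    intro a b
    rw [hΦ, hΦ, hsk, real_inner_comm]
  -- the Bianchi identity forces the following
  have hE : ∀ x y z w : V,
      Φ y z * (2 * Q x w + lam * Φ x w - β x w)
      + Φ z x * (2 * Q y w + lam * Φ y w - β y w)
      + Φ x y * (2 * Q z w + lam * Φ z w - β z w) = 0 := by
    intro x y z w
    have hb := hbianchi x y z w
    simp only [hK, hα] at hb
    linear_combination hb
      + ((⟪z, y⟫ - η z * η y) - (⟪y, z⟫ - η y * η z)) * Psym x w
      + ((⟪x, z⟫ - η x * η z) - (⟪z, x⟫ - η z * η x)) * Psym y w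
      + (-(⟪y, w⟫ - η y * η w)) * Psym z x
      + (⟪z, w⟫ - η z * η w) * Psym y x
      + ((⟪y, x⟫ - η y * η x) - (⟪x, y⟫ - η x * η y)) * Psym z w
      + (⟪x, w⟫ - η x * η w) * Psym z y
      + Q y w * Φskew z x
      + Q z w * Φskew y x
      + Q x w * Φskew z y
      + (-(P w y)) * real_inner_comm x z
      + (P w z) * real_inner_comm x y
      + (P w x) * real_inner_comm y z
  -- hence 2Q + lam Φ - β = 0
  have hR : ∀ x w : V, 2 * Q x w + lam * Φ x w - β x w = 0 := by
    intro x w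
    obtain ⟨y, hyT, hy0⟩ :
        ∃ y, y ∈ (Submodule.span ℝ ({x, φ x, ξ} : Set V))ᗮ ∧ y ≠ 0 := by
      apply Submodule.exists_mem_ne_zero_of_ne_bot
      intro hbot
      have h1 := Submodule.finrank_add_finrank_orthogonal
        (K := Submodule.span ℝ ({x, φ x, ξ} : Set V))
      rw [hbot, hdim, finrank_bot] at h1
      have h2 : Module.finrank ℝ (Submodule.span ℝ ({x, φ x, ξ} : Set V)) ≤ 3 := by
        have h3 := finrank_span_finset_le_card (R := ℝ) ({x, φ x, ξ} : Finset V)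
        have h4 : (({x, φ x, ξ} : Finset V) : Set V) = ({x, φ x, ξ} : Set V) := by simp
        have h5 : ({x, φ x, ξ} : Finset V).card ≤ 3 := by
          have c2 := Finset.card_insert_le x ({φ x, ξ} : Finset V)
          have c1 := Finset.card_insert_le (φ x) ({ξ} : Finset V)
          have c0 : ({ξ} : Finset V).card = 1 := Finset.card_singleton ξ
          omega
        rw [Set.finrank, h4] at h3
        omega
      omega
    have hmem := (Submodule.mem_orthogonal _ y).mp hyT
    have hx1 : ⟪x, y⟫ = 0 := hmem x (Submodule.subset_span (by simp))
    have hx2 : ⟪φ x, y⟫ = 0 := hmem (φ x) (Submodule.subset_span (by simp))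
    have hx3 : ⟪ξ, y⟫ = 0 := hmem ξ (Submodule.subset_span (by simp))
    have hηy : η y = 0 := by rw [hη, real_inner_comm]; exact hx3
    have hEi := hE x y (φ y) w
    have c1 : Φ y (φ y) = ⟪y, y⟫ := by
      rw [hΦ, hmet, hηy]; ring
    have c2 : Φ (φ y) x = 0 := by
      have hyx : ⟪y, x⟫ = 0 := by rw [real_inner_comm]; exact hx1
      rw [hΦ, hφφ, hηy]
      simp [inner_add_left, inner_neg_left, inner_smul_left, hyx]
    have c3 : Φ x y = 0 := by rw [hΦ]; exact hx2
    rw [c1, c2, c3] at hEi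
    have h0 : ⟪y, y⟫ * (2 * Q x w + lam * Φ x w - β x w) = 0 := by
      linear_combination hEi
    have hyy : ⟪y, y⟫ ≠ 0 := fun h => hy0 (inner_self_eq_zero.mp h)
    exact (mul_eq_zero.mp h0).resolve_left hyy
  -- inner with φ in second slot
  have hiφ : ∀ u v : V, ⟪u, φ v⟫ = -Φ u v := by
    intro u v
    have h := hsk u v
    rw [hΦ]; linarith
  -- A is completely determined
  have hAφ : ∀ u v : V, A u (φ v) = -2 * p u * q v + lam * Φ u v := by
    intro u v
    have h := hR u v
    rw [hQ, hP, hβ, hpφ, hqφ, hηφ] at h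
    have hfa : ⟪u, φ v⟫ = -Φ u v := hiφ u v
    linear_combination (-1/2 : ℝ) * h + (-(lam/2)) * hfa
  have hΦff : ∀ u v : V, Φ u (φ v) = ⟪u, v⟫ - η u * η v := by
    intro u v; rw [hΦ, hmet]
  have hAex : ∀ u v : V, A u v = 2 * p u * p v - lam * (⟪u, v⟫ - η u * η v) := by
    intro u v
    have h1 := hAφ u (φ v)
    rw [hφφ, map_add, map_neg, map_smul, hAξ, hqφ, hΦff] at h1
    simp only [smul_eq_mul, mul_zero] at h1
    linear_combination -h1
  have Pex : ∀ u v : V, P u v = p u * p v + q u * q v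
      - lam / 2 * (⟪u, v⟫ - η u * η v) := by
    intro u v
    rw [hP, hAex]; ring
  have Qex : ∀ u v : V, Q u v = p u * q v - q u * p v - lam / 2 * Φ u v := by
    intro u v
    rw [hQ, Pex, hpφ, hqφ, hηφ, hiφ]
    ring
  have αex : ∀ u v : V, α u v = -(2 * (p u * q v - p v * q u)) + 2 * lam * Φ u v := by
    intro u v
    rw [hα, Qex, Qex, Φskew v u]
    ring
  -- summation tools
  have hnorm : ∀ i, ⟪(e i : V), e i⟫ = 1 := by
    intro i
    rw [real_inner_self_eq_norm_mul_norm, e.orthonormal.1 i]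
    norm_num
  have hsum : ∀ u v : V, (∑ i, ⟪e i, u⟫ * ⟪e i, v⟫) = ⟪u, v⟫ := by
    intro u v
    calc (∑ i, ⟪e i, u⟫ * ⟪e i, v⟫) = ∑ i, ⟪u, e i⟫ * ⟪e i, v⟫ :=
          Finset.sum_congr rfl (fun i _ => by rw [real_inner_comm])
      _ = ⟪u, v⟫ := e.sum_inner_mul_inner u v
  have hff : ∀ u v : V, ⟪φ u, φ v⟫ = ⟪u, v⟫ - ⟪u, ξ⟫ * ⟪v, ξ⟫ := by
    intro u v
    rw [hmet, hη, hη]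
  have hfup : ∀ u : V, ⟪φ u, psharp⟫ = -⟪u, φ psharp⟫ := fun u => hsk u psharp
  have hpx : ⟪psharp, ξ⟫ = 0 := by rw [hps]; exact hpξ
  have hbx : ⟪φ psharp, ξ⟫ = 0 := by rw [← hη]; exact hηφ psharp
  have hlam' : ⟪psharp, psharp⟫ = lam := hlam.symm
  -- value of tr P
  have htrPv : trP = (2 - (m : ℝ)) * lam := by
    have h1 : ∀ i, P (e i) (e i) =
        ⟪e i, psharp⟫ * ⟪e i, psharp⟫ + ⟪e i, φ psharp⟫ * ⟪e i, φ psharp⟫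
        + (lam / 2) * (⟪e i, ξ⟫ * ⟪e i, ξ⟫) + (-(lam / 2)) := by
      intro i
      simp only [Pex, hη, hpe, hqe, hnorm]
      ring
    calc trP = ∑ i, P (e i) (e i) := htrP
      _ = ∑ i, (⟪e i, psharp⟫ * ⟪e i, psharp⟫ + ⟪e i, φ psharp⟫ * ⟪e i, φ psharp⟫
            + (lam / 2) * (⟪e i, ξ⟫ * ⟪e i, ξ⟫) + (-(lam / 2))) :=
          Finset.sum_congr rfl (fun i _ => h1 i)
      _ = (2 - (m : ℝ)) * lam := by
          simp only [Finset.sum_add_distrib, ← Finset.mul_sum, hsum, Finset.sum_const,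
            Finset.card_univ, Fintype.card_fin, nsmul_eq_mul, hff, hpx, hξ, hlam']
          push_cast
          ring
  -- the Ricci formula
  have part1 : ∀ y z, Ric y z = (2 * (m : ℝ) + 4) * P y z
      + trP * (⟪y, z⟫ - η y * η z) := by
    intro y z
    have hKi : ∀ i, K (e i) y z (e i) =
        (⟪y, z⟫ - ⟪y, ξ⟫ * ⟪z, ξ⟫) * (⟪e i, psharp⟫ * ⟪e i, psharp⟫)
        + (-3 * ⟪z, φ psharp⟫) * (⟪e i, φ y⟫ * ⟪e i, psharp⟫)
        + (-3 * ⟪y, φ psharp⟫) * (⟪e i, φ z⟫ * ⟪e i, psharp⟫)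
        + (⟪y, ξ⟫ * ⟪z, psharp⟫ + ⟪z, ξ⟫ * ⟪y, psharp⟫) * (⟪e i, psharp⟫ * ⟪e i, ξ⟫)
        + (-⟪z, psharp⟫) * (⟪e i, y⟫ * ⟪e i, psharp⟫)
        + (-⟪y, psharp⟫) * (⟪e i, z⟫ * ⟪e i, psharp⟫)
        + (⟪y, z⟫ - ⟪y, ξ⟫ * ⟪z, ξ⟫) * (⟪e i, φ psharp⟫ * ⟪e i, φ psharp⟫)
        + (3 * ⟪z, psharp⟫) * (⟪e i, φ y⟫ * ⟪e i, φ psharp⟫)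
        + (3 * ⟪y, psharp⟫) * (⟪e i, φ z⟫ * ⟪e i, φ psharp⟫)
        + (⟪y, ξ⟫ * ⟪z, φ psharp⟫ + ⟪z, ξ⟫ * ⟪y, φ psharp⟫) * (⟪e i, φ psharp⟫ * ⟪e i, ξ⟫)
        + (-⟪z, φ psharp⟫) * (⟪e i, y⟫ * ⟪e i, φ psharp⟫)
        + (-⟪y, φ psharp⟫) * (⟪e i, z⟫ * ⟪e i, φ psharp⟫)
        + (-3 * lam) * (⟪e i, φ y⟫ * ⟪e i, φ z⟫)
        + (⟪y, z⟫ * lam - ⟪y, psharp⟫ * ⟪z, psharp⟫ - ⟪y, φ psharp⟫ * ⟪z, φ psharp⟫)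
            * (⟪e i, ξ⟫ * ⟪e i, ξ⟫)
        + (-(⟪z, ξ⟫ * lam)) * (⟪e i, y⟫ * ⟪e i, ξ⟫)
        + (-(⟪y, ξ⟫ * lam)) * (⟪e i, z⟫ * ⟪e i, ξ⟫)
        + lam * (⟪e i, y⟫ * ⟪e i, z⟫)
        + (⟪y, ξ⟫ * ⟪z, ξ⟫ * lam - ⟪y, z⟫ * lam + ⟪y, psharp⟫ * ⟪z, psharp⟫
            + ⟪y, φ psharp⟫ * ⟪z, φ psharp⟫) := by
      intro i
      have hski : ∀ u : V, ⟪φ (e i), u⟫ = -⟪e i, φ u⟫ := fun u => hsk (e i) u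
      have hci : ∀ u : V, ⟪u, e i⟫ = ⟪e i, u⟫ := fun u => real_inner_comm (e i) u
      simp only [hK, Pex, Qex, αex, hβ, hΦ, hη, hpe, hqe]
      simp only [hski, hφself2]
      simp only [hnorm]
      simp only [hci]
      ring
    calc Ric y z = ∑ i, K (e i) y z (e i) := hRic y z
      _ = _ := Finset.sum_congr rfl (fun i _ => hKi i)
      _ = (2 * (m : ℝ) + 4) * P y z + trP * (⟪y, z⟫ - η y * η z) := by
          simp only [Finset.sum_add_distrib, ← Finset.mul_sum, hsum, Finset.sum_const,
            Finset.card_univ, Fintype.card_fin, nsmul_eq_mul, hff, hfup, hpx, hbx, hξ,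
            hlam', hφself2]
          simp only [Pex, htrPv, hη, hpe, hqe]
          push_cast
          ring
  refine ⟨part1, ?_⟩
  have h1 : ∀ i, Ric (e i) (e i) = (2 * (m : ℝ) + 4) * P (e i) (e i)
      + trP + (-trP) * (⟪e i, ξ⟫ * ⟪e i, ξ⟫) := by
    intro i
    rw [part1 (e i) (e i), hnorm i, hη]
    ring
  calc Scal = ∑ i, Ric (e i) (e i) := hScal
    _ = ∑ i, ((2 * (m : ℝ) + 4) * P (e i) (e i) + trP
          + (-trP) * (⟪e i, ξ⟫ * ⟪e i, ξ⟫)) :=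
        Finset.sum_congr rfl (fun i _ => h1 i)
    _ = (4 * (m : ℝ) + 4) * trP := by
        simp only [Finset.sum_add_distrib, ← Finset.mul_sum, hsum, Finset.sum_const,
          Finset.card_univ, Fintype.card_fin, nsmul_eq_mul, hξ]
        rw [← htrP]
        push_cast
        ring
end

section
/- (Algebraic core of the Main Theorem.) Let (V, ⟪·,·⟫) be a real inner product space of dimension 2m+1 with m > 2, equipped with an almost contact metric structure (φ, ξ, η) with fundamental 2-form Φ. Let p be a linear functional with p(ξ) = 0, q = -p ∘ φ, λ = ⟪p♯, p♯⟫; let A be a symmetric bilinear form with A(x, ξ) = 0 for all x, and define P, Q, α, β and the quadrilinear form K as in the context. Assume K satisfies the pair symmetry K(x,y,z,w) = K(z,w,x,y) and the first Bianchi identity K(x,y,z,w) + K(y,z,x,w) + K(z,x,y,w) = 0 for all x, y, z, w ∈ V. Fix an orthonormal basis (e_i) of V, set Ric(y,z) = Σ_i K(e_i, y, z, e_i), Scal = Σ_i Ric(e_i, e_i), L₀ = -Scal/(4(m+1)), L(y,z) = -(1/(2(m+2)))·(Ric(y,z) + L₀·(⟪y,z⟫ - η(y)η(z))), M(y,z)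 = -L(y, φ z), and define the cosymplectic Bochner curvature tensor B(x,y,z,w) = K(x,y,z,w) + (⟪x,w⟫ - η(x)η(w))·L(y,z) - (⟪y,w⟫ - η(y)η(w))·L(x,z) + L(x,w)·(⟪y,z⟫ - η(y)η(z)) - L(y,w)·(⟪x,z⟫ - η(x)η(z)) + Φ(x,w)·M(y,z) - Φ(y,w)·M(x,z) + M(x,w)·Φ(y,z) - M(y,w)·Φ(x,z) - 2·(M(x,y)·Φ(z,w) + Φ(x,y)·M(z,w)). Then B(x,y,z,w) = 0 for all x, y, z, w ∈ V. (This expresses: if a cosymplectic manifold of dimension 2m+1, m > 2, admits a cosymplectic conformal connection of zero curvature, then its cosymplectic Bochner curvature tensor vanishes.) -/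
open RealInnerProductSpace

/-- Algebraic core of the main theorem: if a cosymplectic manifold of dimension
`2m+1`, `m > 2`, admits a cosymplectic conformal connection of zero curvature, then
its cosymplectic Bochner curvature tensor vanishes. -/
theorem stmt_12
    {V : Type*} [NormedAddCommGroup V] [InnerProductSpace ℝ V] [FiniteDimensional ℝ V]
    (m : ℕ) (hm : 2 < m) (hdim : Module.finrank ℝ V = 2 * m + 1)
    (φ : V →ₗ[ℝ] V) (ξ : V) (hξ : ⟪ξ, ξ⟫ = 1)
    (η : V → ℝ) (hη : ∀ x, η x = ⟪x, ξ⟫)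
    (hφφ : ∀ x, φ (φ x) = -x + η x • ξ)
    (hφξ : φ ξ = 0)
    (hηφ : ∀ x, η (φ x) = 0)
    (hmet : ∀ x y, ⟪φ x, φ y⟫ = ⟪x, y⟫ - η x * η y)
    (Φ : V → V → ℝ) (hΦ : ∀ x y, Φ x y = ⟪φ x, y⟫)
    (p : V →ₗ[ℝ] ℝ) (hpξ : p ξ = 0)
    (psharp : V) (hps : ∀ x, ⟪psharp, x⟫ = p x)
    (q : V → ℝ) (hq : ∀ x, q x = - p (φ x))
    (lam : ℝ) (hlam : lam = ⟪psharp, psharp⟫)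
    (A : V →ₗ[ℝ] V →ₗ[ℝ] ℝ) (hAsymm : ∀ x y, A x y = A y x) (hAξ : ∀ x, A x ξ = 0)
    (P : V → V → ℝ)
    (hP : ∀ x y, P x y = A x y - p x * p y + q x * q y
      + (lam / 2) * (⟪x, y⟫ - η x * η y))
    (Q : V → V → ℝ) (hQ : ∀ x y, Q x y = - P x (φ y))
    (α : V → V → ℝ) (hα : ∀ x y, α x y = -(Q x y - Q y x - lam * Φ x y))
    (β : V → V → ℝ) (hβ : ∀ x y, β x y = 2 * (p x * q y - p y * q x))
    (K : V → V → V → V → ℝ)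
    (hK : ∀ x y z w, K x y z w =
      (⟪x, w⟫ - η x * η w) * P y z - (⟪y, w⟫ - η y * η w) * P x z
        + P x w * (⟪y, z⟫ - η y * η z) - P y w * (⟪x, z⟫ - η x * η z)
        + Φ x w * Q y z - Φ y w * Q x z + Q x w * Φ y z - Q y w * Φ x z
        + α x y * Φ z w - Φ x y * β z w)
    (hpair : ∀ x y z w, K x y z w = K z w x y)
    (hbianchi : ∀ x y z w, K x y z w + K y z x w + K z x y w = 0)
    (e : OrthonormalBasis (Fin (2 * m + 1)) ℝ V)
    (Ric : V → V → ℝ) (hRic : ∀ y z, Ric y z = ∑ i, K (e i) y z (e i))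
    (Scal : ℝ) (hScal : Scal = ∑ i, Ric (e i) (e i))
    (L₀ : ℝ) (hL₀ : L₀ = -Scal / (4 * ((m : ℝ) + 1)))
    (L : V → V → ℝ)
    (hL : ∀ y z, L y z = -(1 / (2 * ((m : ℝ) + 2))) * (Ric y z + L₀ * (⟪y, z⟫ - η y * η z)))
    (M : V → V → ℝ) (hM : ∀ y z, M y z = - L y (φ z))
    (B : V → V → V → V → ℝ)
    (hB : ∀ x y z w, B x y z w = K x y z w
      + (⟪x, w⟫ - η x * η w) * L y z - (⟪y, w⟫ - η y * η w) * L x z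
      + L x w * (⟪y, z⟫ - η y * η z) - L y w * (⟪x, z⟫ - η x * η z)
      + Φ x w * M y z - Φ y w * M x z + M x w * Φ y z - M y w * Φ x z
      - 2 * (M x y * Φ z w + Φ x y * M z w)) :
    ∀ x y z w, B x y z w = 0 := by
    classical
  -- ### basic identities
  have hηξ : η ξ = 1 := by rw [hη]; exact hξ
  have hskew : ∀ a b : V, ⟪φ a, b⟫ = -⟪a, φ b⟫ := by
    intro a b
    have h1 := hmet a (φ b)
    rw [hηφ b, mul_zero, sub_zero, hφφ b] at h1
    have h2 : ⟪φ a, ξ⟫ = 0 := by rw [← hη]; exact hηφ a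
    rw [inner_add_right, inner_neg_right, real_inner_smul_right, h2, mul_zero, add_zero] at h1
    linarith
  have hφself : ∀ v : V, ⟪φ v, v⟫ = 0 := by
    intro v
    have h1 := hskew v v
    have h2 := real_inner_comm v (φ v)
    linarith
  have hqξ : q ξ = 0 := by rw [hq, hφξ, map_zero, neg_zero]
  have hqφ : ∀ a, q (φ a) = p a := by
    intro a
    rw [hq, hφφ, map_add, map_neg, map_smul, hpξ, smul_eq_mul, mul_zero, add_zero, neg_neg]
  have hpφ : ∀ a, p (φ a) = -q a := fun a => by rw [hq, neg_neg]
  have hqs : ∀ v, q v = ⟪φ psharp, v⟫ := by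
    intro v; rw [hq, hskew psharp v, hps]
  have hηps : η psharp = 0 := by rw [hη, hps, hpξ]
  have hpps : p psharp = lam := by rw [← hps, ← hlam]
  have hΦanti : ∀ a b, Φ a b = -Φ b a := by
    intro a b; rw [hΦ, hΦ, hskew, real_inner_comm]
  have hPsymm : ∀ a b, P a b = P b a := by
    intro a b; rw [hP, hP, hAsymm a b, real_inner_comm a b]; ring
  -- ### the Bianchi residual
  have hres : ∀ a b c d : V,
      Φ b c * (2*Q a d - β a d + lam * Φ a d)
      - Φ a c * (2*Q b d - β b d + lam * Φ b d)
      + Φ a b * (2*Q c d - β c d + lam * Φ c d) = 0 := by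
    intro a b c d
    have hb := hbianchi a b c d
    rw [hK a b c d, hK b c a d, hK c a b d] at hb
    simp only [hα] at hb
    rw [hPsymm c a, hPsymm b a, hPsymm c b, hΦanti c a, hΦanti b a, hΦanti c b,
      real_inner_comm b a, real_inner_comm c a, real_inner_comm c b] at hb
    linear_combination hb
  -- ### existence of an auxiliary unit vector
  have hexists : ∀ u : V, ∃ c : V, ⟪c, c⟫ = 1 ∧ ⟪c, ξ⟫ = 0 ∧ ⟪c, u⟫ = 0 ∧ ⟪c, φ u⟫ = 0 := by
    intro u
    set W : Submodule ℝ V := Submodule.span ℝ ({ξ, u, φ u} : Set V) with hW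
    have hfr : Module.finrank ℝ W ≤ 3 := by
      refine le_trans (finrank_span_le_card _) ?_
      rw [Set.toFinset_insert, Set.toFinset_insert, Set.toFinset_singleton]
      have h1 := Finset.card_insert_le ξ (insert u ({φ u} : Finset V))
      have h2 := Finset.card_insert_le u ({φ u} : Finset V)
      have h3 : ({φ u} : Finset V).card = 1 := Finset.card_singleton _
      omega
    have hpos : 0 < Module.finrank ℝ Wᗮ := by
      have h4 := Submodule.finrank_add_finrank_orthogonal W
      rw [hdim] at h4
      omega
    obtain ⟨v, hvne⟩ := Module.finrank_pos_iff_exists_ne_zero.mp hpos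
    have hv : (v : V) ∈ Wᗮ := v.2
    have hvne' : (v : V) ≠ 0 := by
      simpa using hvne
    have hnv : ‖(v : V)‖ ≠ 0 := norm_ne_zero_iff.mpr hvne'
    have horth : ∀ u' ∈ W, ⟪u', (v : V)⟫ = 0 := (Submodule.mem_orthogonal W (v : V)).mp hv
    have hmemξ : ξ ∈ W := Submodule.subset_span (by simp)
    have hmemu : u ∈ W := Submodule.subset_span (by simp)
    have hmemφu : φ u ∈ W := Submodule.subset_span (by simp)
    refine ⟨‖(v : V)‖⁻¹ • (v : V), ?_, ?_, ?_, ?_⟩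
    · rw [real_inner_smul_left, real_inner_smul_right, real_inner_self_eq_norm_sq]
      field_simp
    · rw [real_inner_smul_left, real_inner_comm, horth ξ hmemξ, mul_zero]
    · rw [real_inner_smul_left, real_inner_comm, horth u hmemu, mul_zero]
    · rw [real_inner_smul_left, real_inner_comm, horth (φ u) hmemφu, mul_zero]
  -- ### vanishing of the obstruction C
  have hC : ∀ a d : V, 2*Q a d - β a d + lam * Φ a d = 0 := by
    intro a d
    obtain ⟨c, h1, h2, h3, h4⟩ := hexists a
    have hηc : η c = 0 := by rw [hη]; exact h2
    have k1 : Φ c (φ c) = 1 := by rw [hΦ, hmet, hηc, mul_zero, sub_zero, h1]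
    have k2 : Φ a (φ c) = 0 := by
      rw [hΦ, hmet, hηc, mul_zero, sub_zero, real_inner_comm, h3]
    have k3 : Φ a c = 0 := by rw [hΦ, real_inner_comm]; exact h4
    have hr := hres a c (φ c) d
    rw [k1, k2, k3] at hr
    linarith
  -- ### the form A is fully determined
  have hAφ : ∀ a b : V, A a (φ b) = -2 * p a * q b + lam * Φ a b := by
    intro a b
    have h := hC a b
    rw [hQ, hP, hpφ b, hqφ b, hηφ b, hβ] at h
    have haφ : ⟪a, φ b⟫ = -Φ a b := by
      rw [hΦ, hskew, real_inner_comm]; ring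
    rw [haφ] at h
    linarith
  have hA2 : ∀ a b : V, A a b = 2 * p a * p b - lam * (⟪a, b⟫ - η a * η b) := by
    intro a b
    have h := hAφ a (φ b)
    have e1 : A a (φ (φ b)) = -A a b := by
      rw [hφφ b, map_add, map_neg, map_smul, hAξ a, smul_eq_mul, mul_zero, add_zero]
    have e3 : Φ a (φ b) = ⟪a, b⟫ - η a * η b := by rw [hΦ, hmet]
    rw [e1, hqφ b, e3] at h
    linarith
  have hP2 : ∀ a b : V, P a b = p a * p b + q a * q b - lam/2 * (⟪a, b⟫ - η a * η b) := by
    intro a b; rw [hP, hA2]; ring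
  have hQ2 : ∀ a b : V, Q a b = p a * q b - q a * p b - lam/2 * Φ a b := by
    intro a b
    have haφ : ⟪a, φ b⟫ = -Φ a b := by rw [hΦ, hskew, real_inner_comm]; ring
    rw [hQ, hP2, hpφ b, hqφ b, hηφ b, haφ]; ring
  -- ### summation lemma
  have sum_ip : ∀ c d : V, (∑ i, ⟪c, e i⟫ * ⟪d, e i⟫) = ⟪c, d⟫ := by
    intro c d
    rw [← e.sum_inner_mul_inner c d]
    exact Finset.sum_congr rfl fun i _ => by rw [real_inner_comm d (e i)]
  have g1 : ∀ v : V, ⟪ξ, v⟫ = η v := by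
    intro v; rw [real_inner_comm]; exact (hη v).symm
  -- ### Ricci tensor
  have hRic2 : ∀ y z : V, Ric y z
      = (2*(m:ℝ)+4) * P y z - ((m:ℝ)-2) * lam * (⟪y, z⟫ - η y * η z) := by
    intro y z
    rw [hRic]
    have hKe : ∀ i, K (e i) y z (e i) =
          (((1 : ℝ) * η y * η z * lam) + ((-1 : ℝ) * ⟪y, z⟫ * lam) + ((1 : ℝ) * p y * p z) + ((1 : ℝ) * q y * q z))
      + ((1 : ℝ) * ⟪y, z⟫ * lam) * (⟪ξ, e i⟫ * ⟪ξ, e i⟫)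
      + ((-1 : ℝ) * p y * p z) * (⟪ξ, e i⟫ * ⟪ξ, e i⟫)
      + ((-1 : ℝ) * q y * q z) * (⟪ξ, e i⟫ * ⟪ξ, e i⟫)
      + ((1 : ℝ) * η y * p z) * (⟪ξ, e i⟫ * ⟪psharp, e i⟫)
      + ((1 : ℝ) * η z * p y) * (⟪ξ, e i⟫ * ⟪psharp, e i⟫)
      + ((1 : ℝ) * η y * q z) * (⟪ξ, e i⟫ * ⟪φ psharp, e i⟫)
      + ((1 : ℝ) * η z * q y) * (⟪ξ, e i⟫ * ⟪φ psharp, e i⟫)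
      + ((-1 : ℝ) * η z * lam) * (⟪ξ, e i⟫ * ⟪y, e i⟫)
      + ((-1 : ℝ) * η y * lam) * (⟪ξ, e i⟫ * ⟪z, e i⟫)
      + ((-1 : ℝ) * η y * η z) * (⟪psharp, e i⟫ * ⟪psharp, e i⟫)
      + ((1 : ℝ) * ⟪y, z⟫) * (⟪psharp, e i⟫ * ⟪psharp, e i⟫)
      + ((-1 : ℝ) * p z) * (⟪psharp, e i⟫ * ⟪y, e i⟫)
      + ((-1 : ℝ) * p y) * (⟪psharp, e i⟫ * ⟪z, e i⟫)
      + ((-3 : ℝ) * q z) * (⟪psharp, e i⟫ * ⟪φ y, e i⟫)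
      + ((-3 : ℝ) * q y) * (⟪psharp, e i⟫ * ⟪φ z, e i⟫)
      + ((-1 : ℝ) * η y * η z) * (⟪φ psharp, e i⟫ * ⟪φ psharp, e i⟫)
      + ((1 : ℝ) * ⟪y, z⟫) * (⟪φ psharp, e i⟫ * ⟪φ psharp, e i⟫)
      + ((-1 : ℝ) * q z) * (⟪φ psharp, e i⟫ * ⟪y, e i⟫)
      + ((-1 : ℝ) * q y) * (⟪φ psharp, e i⟫ * ⟪z, e i⟫)
      + ((3 : ℝ) * p z) * (⟪φ psharp, e i⟫ * ⟪φ y, e i⟫)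
      + ((3 : ℝ) * p y) * (⟪φ psharp, e i⟫ * ⟪φ z, e i⟫)
      + ((1 : ℝ) * lam) * (⟪y, e i⟫ * ⟪z, e i⟫)
      + ((-3 : ℝ) * lam) * (⟪φ y, e i⟫ * ⟪φ z, e i⟫) := by
      intro i
      have hee : ⟪e i, e i⟫ = (1:ℝ) := by
        rw [real_inner_self_eq_norm_sq, e.orthonormal.1 i]; norm_num
      have c1 : Φ (e i) (e i) = 0 := by rw [hΦ]; exact hφself _
      have c2 : Φ y (e i) = ⟪φ y, e i⟫ := hΦ _ _
      have c3 : Φ z (e i) = ⟪φ z, e i⟫ := hΦ _ _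
      have c4 : Φ (e i) z = -⟪φ z, e i⟫ := by
        rw [hΦ, hskew, real_inner_comm]
      have c5 : Φ (e i) y = -⟪φ y, e i⟫ := by
        rw [hΦ, hskew, real_inner_comm]
      have c6 : p (e i) = ⟪psharp, e i⟫ := (hps _).symm
      have c7 : q (e i) = ⟪φ psharp, e i⟫ := hqs _
      have c8 : η (e i) = ⟪ξ, e i⟫ := by rw [hη]; exact real_inner_comm _ _
      have c9 : ⟪e i, z⟫ = ⟪z, e i⟫ := real_inner_comm _ _
      rw [hK]
      simp only [hα, hQ2, hP2, hβ, c1, c2, c3, c4, c5, c6, c7, c8, c9, hee]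
      ring
    rw [Finset.sum_congr rfl fun i _ => hKe i]
    simp only [Finset.sum_add_distrib, ← Finset.mul_sum, sum_ip, Finset.sum_const,
      Finset.card_univ, Fintype.card_fin, nsmul_eq_mul]
    simp only [hmet, g1, hps, ← hqs, hηφ, hpφ, hqφ, hηξ, hηps, hpps]
    rw [hP2]
    push_cast
    ring
  -- ### scalar curvature
  have hScal2 : Scal = -4*((m:ℝ)-2)*((m:ℝ)+1)*lam := by
    rw [hScal]
    have hSe : ∀ i, Ric (e i) (e i) =
        (2*(m:ℝ)+4) * (⟪psharp, e i⟫ * ⟪psharp, e i⟫)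
        + (2*(m:ℝ)+4) * (⟪φ psharp, e i⟫ * ⟪φ psharp, e i⟫)
        + (2*(m:ℝ)*lam) * (⟪ξ, e i⟫ * ⟪ξ, e i⟫) + (-2*(m:ℝ)*lam) := by
      intro i
      have hee : ⟪e i, e i⟫ = (1:ℝ) := by
        rw [real_inner_self_eq_norm_sq, e.orthonormal.1 i]; norm_num
      have c6 : p (e i) = ⟪psharp, e i⟫ := (hps _).symm
      have c7 : q (e i) = ⟪φ psharp, e i⟫ := hqs _
      have c8 : η (e i) = ⟪ξ, e i⟫ := by rw [hη]; exact real_inner_comm _ _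
      rw [hRic2, hP2]
      simp only [c6, c7, c8, hee]
      ring
    rw [Finset.sum_congr rfl fun i _ => hSe i]
    simp only [Finset.sum_add_distrib, ← Finset.mul_sum, sum_ip, Finset.sum_const,
      Finset.card_univ, Fintype.card_fin, nsmul_eq_mul]
    simp only [g1, hps, ← hqs, hηξ, hηps, hpps, hqφ]
    push_cast
    ring
  -- ### the tensor L coincides with -P
  have hm1 : ((m:ℝ)+1) ≠ 0 := by positivity
  have hm2 : ((m:ℝ)+2) ≠ 0 := by positivity
  have hL₀2 : L₀ = ((m:ℝ)-2)*lam := by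
    rw [hL₀, hScal2]; field_simp
  have hL2 : ∀ y z : V, L y z = -P y z := by
    intro y z
    rw [hL, hRic2, hL₀2]
    field_simp
    ring
  have hM2 : ∀ y z : V, M y z = -Q y z := by
    intro y z
    rw [hM, hL2 y (φ z), hQ]
  -- ### conclusion
  intro x y z w
  rw [hB, hK, hα]
  simp only [hL2, hM2, hQ2, hβ]
  rw [hΦanti y x]
  ring
end

section
/- Let (V, ⟪·,·⟫) be a real inner product space of dimension 2m+1 with m ≥ 1, equipped with an almost contact metric structure (φ, ξ, η) with fundamental 2-form Φ. Let K be a quadrilinear form on V satisfying, for all x, y, z, w ∈ V: K(x,y,z,w) = K(z,w,x,y), K(x,y,z,w) = -K(y,x,z,w), K(x,y,z,w) = -K(x,y,w,z), and K(x,y,z,ξ) = 0. Fix an orthonormal basis (e_i) of V, set Ric(y,z) = Σ_i K(e_i, y, z, e_i), Scal = Σ_i Ric(e_i, e_i), L₀ = -Scal/(4(m+1)), L(y,z) = -(1/(2(m+2)))·(Ric(y,z) + L₀·(⟪y,z⟫ - η(y)η(z))), M(y,z) = -L(y, φ z), and define the cosymplectic Bochner curvature tensor B(x,y,z,w) = K(x,y,z,w)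 + (⟪x,w⟫ - η(x)η(w))·L(y,z) - (⟪y,w⟫ - η(y)η(w))·L(x,z) + L(x,w)·(⟪y,z⟫ - η(y)η(z)) - L(y,w)·(⟪x,z⟫ - η(x)η(z)) + Φ(x,w)·M(y,z) - Φ(y,w)·M(x,z) + M(x,w)·Φ(y,z) - M(y,w)·Φ(x,z) - 2·(M(x,y)·Φ(z,w) + Φ(x,y)·M(z,w)). Then B(x,y,z,ξ) = 0 for all x, y, z ∈ V (the identity B_{kji}^t η_t = 0 of the cosymplectic Bochner tensor). -/
open RealInnerProductSpace

/-- The identity `B_{kji}^t η_t = 0` for the cosymplectic Bochner curvature tensor built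
from a curvature-like quadrilinear form `K` with `K(x,y,z,ξ) = 0`. -/
theorem stmt_13
    {V : Type*} [NormedAddCommGroup V] [InnerProductSpace ℝ V] [FiniteDimensional ℝ V]
    (m : ℕ) (hm : 1 ≤ m) (hdim : Module.finrank ℝ V = 2 * m + 1)
    (φ : V →ₗ[ℝ] V) (ξ : V) (hξ : ⟪ξ, ξ⟫ = 1)
    (η : V → ℝ) (hη : ∀ x, η x = ⟪x, ξ⟫)
    (hφφ : ∀ x, φ (φ x) = -x + η x • ξ)
    (hφξ : φ ξ = 0)
    (hηφ : ∀ x, η (φ x) = 0)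
    (hmet : ∀ x y, ⟪φ x, φ y⟫ = ⟪x, y⟫ - η x * η y)
    (Φ : V → V → ℝ) (hΦ : ∀ x y, Φ x y = ⟪φ x, y⟫)
    (K : V →ₗ[ℝ] V →ₗ[ℝ] V →ₗ[ℝ] V →ₗ[ℝ] ℝ)
    (hpair : ∀ x y z w, K x y z w = K z w x y)
    (hskew1 : ∀ x y z w, K x y z w = - K y x z w)
    (hskew2 : ∀ x y z w, K x y z w = - K x y w z)
    (hKξ : ∀ x y z, K x y z ξ = 0)
    (e : OrthonormalBasis (Fin (2 * m + 1)) ℝ V)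
    (Ric : V → V → ℝ) (hRic : ∀ y z, Ric y z = ∑ i, K (e i) y z (e i))
    (Scal : ℝ) (hScal : Scal = ∑ i, Ric (e i) (e i))
    (L₀ : ℝ) (hL₀ : L₀ = -Scal / (4 * ((m : ℝ) + 1)))
    (L : V → V → ℝ)
    (hL : ∀ y z, L y z = -(1 / (2 * ((m : ℝ) + 2))) * (Ric y z + L₀ * (⟪y, z⟫ - η y * η z)))
    (M : V → V → ℝ) (hM : ∀ y z, M y z = - L y (φ z))
    (B : V → V → V → V → ℝ)
    (hB : ∀ x y z w, B x y z w = K x y z w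
      + (⟪x, w⟫ - η x * η w) * L y z - (⟪y, w⟫ - η y * η w) * L x z
      + L x w * (⟪y, z⟫ - η y * η z) - L y w * (⟪x, z⟫ - η x * η z)
      + Φ x w * M y z - Φ y w * M x z + M x w * Φ y z - M y w * Φ x z
      - 2 * (M x y * Φ z w + Φ x y * M z w)) :
    ∀ x y z, B x y z ξ = 0 := by
  have hηξ : η ξ = 1 := by rw [hη]; exact hξ
  have hRicξ : ∀ x, Ric x ξ = 0 := by
    intro x
    rw [hRic]
    apply Finset.sum_eq_zero
    intro i _
    rw [hskew2, hKξ, neg_zero]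
  have hLξ : ∀ x, L x ξ = 0 := by
    intro x
    rw [hL, hRicξ, hη x, hηξ]
    ring
  have hL0 : ∀ x, L x 0 = 0 := by
    intro x
    have hR0 : Ric x 0 = 0 := by
      rw [hRic]; simp
    have hη0 : η 0 = 0 := by rw [hη]; simp
    rw [hL, hR0, hη0, inner_zero_right]
    ring
  have hMξ : ∀ x, M x ξ = 0 := by
    intro x; rw [hM, hφξ, hL0, neg_zero]
  have hΦξ : ∀ x, Φ x ξ = 0 := by
    intro x; rw [hΦ, ← hη, hηφ]
  intro x y z
  rw [hB, hKξ, hΦξ, hΦξ, hΦξ, hLξ, hLξ, hMξ, hMξ, hMξ, hη x, hη y, hηξ]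
  ring
end
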